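/- For the linear program of problem P4, the dual multiplier assignment λ1 = λ2 = λ3 = 1/3, λ8 = 2/3 (all other multipliers zero) is dual feasible and yields dual objective value (2M1+M2+M3)/3, so strong duality certifies that (2M1+M2+M3)/3 is the optimal value. -/

import Mathlib

open Matrix

/-- The constraint matrix `A` of problem P5 (matrix form of P4). -/
noncomputable def matA : Matrix (Fin 17) (Fin 4) ℝ :=
  !![ 1,  0, -1, -1;
      1,  1,  1,  0;
      1,  1,  0,  1;
      0,  1,  0,  0;
      0,  0,  1,  0;
      0,  0,  0,  1;
     -1,  0,  0,  0;
      0, -1,  0,  0;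
      0,  0, -1,  0;
      0,  0,  0, -1;
      0,  0, -1, -1;
      0,  0, -1, -1;
      0,  1,  1,  0;
      0,  1,  1,  0;
      0,  1,  0,  1;
      0,  1,  0,  1;
      0,  0,  0,  0]

/-- The right-hand-side vector `b` of problem P5. -/
noncomputable def vecB (M1 M2 M3 : ℝ) : Fin 17 → ℝ :=
  ![0, M1 + M2, M1 + M3, M1, M2, M3, 0, 0, 0, 0,
    -M3, -M2, M1, M2, M1, M3, M2 + M3 - M1]

/-- The cost vector `c` of problem P5. -/
noncomputable def vecC : Fin 4 → ℝ := ![-1, 0, 0, 0]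

/-- The dual multipliers: `λ1 = λ2 = λ3 = 1/3`, `λ8 = 2/3`, all others zero. -/
noncomputable def vecLam : Fin 17 → ℝ :=
  ![1/3, 1/3, 1/3, 0, 0, 0, 0, 2/3, 0, 0, 0, 0, 0, 0, 0, 0, 0]

/-!
Weighting the first three constraints by `1/3` and `-M_R1 ≤ 0` by `2/3` sums to
`d ≤ (2M1+M2+M3)/3`: this is weak duality for the multipliers `vecLam`. The bound is attained
at `v = (d, 0, M1+M2-d, M1+M3-d)` with `d = (2M1+M2+M3)/3`.
-/

section WeakDuality

variable {m n R : Type*} [Fintype m] [Fintype n] [CommRing R] [PartialOrder R] [IsOrderedRing R]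

theorem neg_dotProduct_le_of_dual_feasible {A : Matrix m n R} {b : m → R} {c : n → R}
    {y : m → R} (hdual : Aᵀ *ᵥ y + c = 0) (hy : 0 ≤ y) {v : n → R}
    (hv : ∀ i, (A *ᵥ v) i ≤ b i) : -(c ⬝ᵥ v) ≤ b ⬝ᵥ y := by
  have hc : c = -(Aᵀ *ᵥ y) := eq_neg_of_add_eq_zero_right hdual
  calc -(c ⬝ᵥ v) = y ⬝ᵥ (A *ᵥ v) := by
        rw [hc, neg_dotProduct, neg_neg, mulVec_transpose, dotProduct_mulVec]
    _ ≤ y ⬝ᵥ b := dotProduct_le_dotProduct_of_nonneg_left hv hy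
    _ = b ⬝ᵥ y := dotProduct_comm y b

theorem isGreatest_of_dual_certificate {A : Matrix m n R} {b : m → R} {c : n → R}
    {y : m → R} (hdual : Aᵀ *ᵥ y + c = 0) (hy : 0 ≤ y) {v : n → R}
    (hv : ∀ i, (A *ᵥ v) i ≤ b i) (hgap : -(c ⬝ᵥ v) = b ⬝ᵥ y) :
    IsGreatest {t : R | ∃ v : n → R, (∀ i, (A *ᵥ v) i ≤ b i) ∧ t = -(c ⬝ᵥ v)} (b ⬝ᵥ y) := by
  refine ⟨⟨v, hv, hgap.symm⟩, ?_⟩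
  rintro t ⟨w, hw, rfl⟩
  exact neg_dotProduct_le_of_dual_feasible hdual hy hw

end WeakDuality

theorem matA_transpose_mulVec_vecLam_add_vecC : matAᵀ *ᵥ vecLam + vecC = 0 := by
  ext j
  fin_cases j <;> norm_num [matA, vecLam, vecC, mulVec, dotProduct, Fin.sum_univ_succ]

theorem vecLam_nonneg : 0 ≤ vecLam := by
  intro i
  fin_cases i <;> norm_num [vecLam]

theorem vecB_dotProduct_vecLam (M1 M2 M3 : ℝ) :
    vecB M1 M2 M3 ⬝ᵥ vecLam = (2 * M1 + M2 + M3) / 3 := by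
  simp only [vecB, vecLam, dotProduct, Fin.sum_univ_succ, Fin.sum_univ_zero, cons_val_zero,
    cons_val_succ]
  ring

noncomputable def primalOpt (M1 M2 M3 : ℝ) : Fin 4 → ℝ :=
  let d := (2 * M1 + M2 + M3) / 3
  ![d, 0, M1 + M2 - d, M1 + M3 - d]

theorem primalOpt_feasible {M1 M2 M3 : ℝ} (h2 : M3 ≤ M2) (h3 : M2 ≤ M1) (h4 : M1 ≤ M2 + M3)
    (i : Fin 17) : (matA *ᵥ primalOpt M1 M2 M3) i ≤ vecB M1 M2 M3 i := by
  fin_cases i <;> simp [matA, vecB, primalOpt, mulVec, dotProduct, Fin.sum_univ_succ] <;> linarith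

theorem neg_vecC_dotProduct_primalOpt (M1 M2 M3 : ℝ) :
    -(vecC ⬝ᵥ primalOpt M1 M2 M3) = (2 * M1 + M2 + M3) / 3 := by
  simp [vecC, primalOpt, dotProduct, Fin.sum_univ_succ]

theorem stmt_12_general (M1 M2 M3 : ℝ) (h2 : M3 ≤ M2) (h3 : M2 ≤ M1)
    (h4 : M1 ≤ M2 + M3) :
    (matA.transpose.mulVec vecLam + vecC = 0) ∧
    (∀ i, 0 ≤ vecLam i) ∧
    (vecB M1 M2 M3 ⬝ᵥ vecLam = (2 * M1 + M2 + M3) / 3) ∧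
    IsGreatest { t : ℝ | ∃ v : Fin 4 → ℝ,
        (∀ i, matA.mulVec v i ≤ vecB M1 M2 M3 i) ∧ t = -(vecC ⬝ᵥ v) }
      ((2 * M1 + M2 + M3) / 3) := by
  have hgap : -(vecC ⬝ᵥ primalOpt M1 M2 M3) = vecB M1 M2 M3 ⬝ᵥ vecLam := by
    rw [neg_vecC_dotProduct_primalOpt, vecB_dotProduct_vecLam]
  refine ⟨matA_transpose_mulVec_vecLam_add_vecC, vecLam_nonneg,
    vecB_dotProduct_vecLam M1 M2 M3, ?_⟩
  rw [← vecB_dotProduct_vecLam M1 M2 M3]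
  exact isGreatest_of_dual_certificate matA_transpose_mulVec_vecLam_add_vecC vecLam_nonneg
    (primalOpt_feasible h2 h3 h4) hgap

/-- the LP duality certificate from Appendix A: the multiplier vector
is dual feasible, has dual objective value `(2M1+M2+M3)/3`, and hence strong duality
certifies that `(2M1+M2+M3)/3` is the optimal value of P5 (maximizing `-cᵀv`). -/
theorem stmt_12 (M1 M2 M3 : ℝ) (h1 : 0 ≤ M3) (h2 : M3 ≤ M2) (h3 : M2 ≤ M1)
    (h4 : M1 ≤ M2 + M3) :
    (matA.transpose.mulVec vecLam + vecC = 0) ∧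
    (∀ i, 0 ≤ vecLam i) ∧
    (vecB M1 M2 M3 ⬝ᵥ vecLam = (2 * M1 + M2 + M3) / 3) ∧
    IsGreatest { t : ℝ | ∃ v : Fin 4 → ℝ,
        (∀ i, matA.mulVec v i ≤ vecB M1 M2 M3 i) ∧ t = -(vecC ⬝ᵥ v) }
      ((2 * M1 + M2 + M3) / 3) :=
  stmt_12_general M1 M2 M3 h2 h3 h4
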